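/- arXiv:2307.03125 — 5 statements merged into one kernel-verified Lean document; each statement's English description precedes it below -/
import Mathlib

section
/- Let G be a strongly left-invariant metric semigroup with no two-sided identity. Then G has no idempotent elements. More precisely, d(g, g²) > 0 for every g ∈ G. -/
/-- A strongly left-invariant metric semigroup with no two-sided identity has no idempotents:
`d(g, g²) > 0` for every `g`. -/
theorem no_identity_no_idempotent {G : Type*} [Semigroup G] [MetricSpace G]
    (hleft : ∀ a b c : G, dist (c * a) (c * b) = dist a b)
    (hstrong : ∀ a b : G, dist a (a * b) = dist b (b * b))
    (hnoid : ¬ ∃ e : G, ∀ g : G, e * g = g ∧ g * e = g) :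
    ∀ g : G, 0 < dist g (g * g) := by
  intro g
  rcases lt_or_eq_of_le (dist_nonneg (x := g) (y := g * g)) with h | h
  · exact h
  exfalso
  have hgg : g * g = g := (dist_eq_zero.mp h.symm).symm
  apply hnoid
  refine ⟨g, fun b => ?_⟩
  have hr : b * g = b := by
    have : dist b (b * g) = 0 := by rw [hstrong b g, hgg]; simp
    exact (dist_eq_zero.mp this).symm
  have hl : g * b = b := by
    have : dist (g * b) b = 0 := by
      have := hleft (g * b) b g
      rw [← mul_assoc, hgg] at this
      simpa using this.symm
    exact dist_eq_zero.mp this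
  exact ⟨hl, hr⟩
end

section
/- Let G be a strongly left-invariant metric semigroup with no two-sided identity. Define G₀ := G ⊔ {e} with e acting as a two-sided identity, and extend the metric by d(e,e) := 0 and d(e,g) = d(g,e) := d(g, g²) for g ∈ G. Then d is a left-invariant metric on the monoid G₀, and G embeds isometrically and homomorphically into G₀. -/
/-!
In a strongly left-invariant metric semigroup, `d(a, a * g) = d(g, g²)` for every `a`, so
`d(g, g²)` behaves like the distance from `g` to a missing identity: left invariance and the
triangle inequality give `|d(a, a²) - d(b, b²)| ≤ d(a, b) ≤ d(a, a²) + d(b, b²)`, which is exactly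
what makes the one-point extension a metric. It is positive because an idempotent `g` would be
a two-sided identity: `d(x, x * g) = d(g, g²) = 0` and `d(g * x, x) = d(g * (g * x), g * x) = 0`.
-/

namespace WithOne

variable {X : Type*} [MetricSpace X]

/-- The extension of the metric of `X` to `WithOne X` in which `1` is at distance `f x` from `x`. -/
noncomputable def extendDist (f : X → ℝ) (x y : WithOne X) : ℝ :=
  WithOne.recOneCoe (WithOne.recOneCoe 0 f y)
    (fun a => WithOne.recOneCoe (f a) (fun b => dist a b) y) x

section

variable (f : X → ℝ)

@[simp] lemma extendDist_one_one : extendDist f 1 1 = 0 := rfl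
@[simp] lemma extendDist_one_coe (b : X) : extendDist f 1 b = f b := rfl
@[simp] lemma extendDist_coe_one (a : X) : extendDist f a 1 = f a := rfl
@[simp] lemma extendDist_coe_coe (a b : X) : extendDist f a b = dist a b := rfl

lemma extendDist_self (x : WithOne X) : extendDist f x x = 0 := by
  cases x using WithOne.recOneCoe <;> simp

lemma extendDist_comm (x y : WithOne X) : extendDist f x y = extendDist f y x := by
  cases x using WithOne.recOneCoe <;> cases y using WithOne.recOneCoe <;> simp [dist_comm]

end

lemma eq_of_extendDist_eq_zero {f : X → ℝ} (hf : ∀ a, f a ≠ 0) {x y : WithOne X}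
    (h : extendDist f x y = 0) : x = y := by
  cases x using WithOne.recOneCoe with
  | one => cases y using WithOne.recOneCoe with
    | one => rfl
    | coe b => exact absurd h (hf b)
  | coe a => cases y using WithOne.recOneCoe with
    | one => exact absurd h (hf a)
    | coe b => exact congrArg _ (dist_eq_zero.mp h)

lemma extendDist_triangle {f : X → ℝ} (hf_le : ∀ a b, f b ≤ f a + dist a b)
    (hdist_le : ∀ a b, dist a b ≤ f a + f b) (x y z : WithOne X) :
    extendDist f x z ≤ extendDist f x y + extendDist f y z := by
  have hf_nonneg (a : X) : 0 ≤ f a := by linarith [hdist_le a a, dist_self a]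
  cases x using WithOne.recOneCoe with
  | one => cases y using WithOne.recOneCoe with
    | one => cases z using WithOne.recOneCoe <;> simp
    | coe b => cases z using WithOne.recOneCoe with
      | one => simpa using add_nonneg (hf_nonneg b) (hf_nonneg b)
      | coe c => simpa using hf_le b c
  | coe a => cases y using WithOne.recOneCoe with
    | one => cases z using WithOne.recOneCoe with
      | one => simp
      | coe c => simpa using hdist_le a c
    | coe b => cases z using WithOne.recOneCoe with
      | one => simpa [dist_comm, add_comm] using hf_le b a
      | coe c => simpa using dist_triangle a b c

end WithOne

structure IsStronglyLeftInvariant (G : Type*) [Semigroup G] [MetricSpace G] : Prop where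
  dist_mul_left : ∀ a b c : G, dist (c * a) (c * b) = dist a b
  dist_mul_right_self : ∀ a b : G, dist a (a * b) = dist b (b * b)

namespace IsStronglyLeftInvariant

variable {G : Type*} [Semigroup G] [MetricSpace G] (h : IsStronglyLeftInvariant G)
include h

lemma dist_mul_self_le (a b : G) : dist b (b * b) ≤ dist a (a * a) + dist a b :=
  calc dist b (b * b) = dist a (a * b) := (h.dist_mul_right_self a b).symm
    _ ≤ dist a (a * a) + dist (a * a) (a * b) := dist_triangle _ _ _
    _ = dist a (a * a) + dist a b := by rw [h.dist_mul_left]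

lemma dist_le_add_dist_mul_self (a b : G) : dist a b ≤ dist a (a * a) + dist b (b * b) :=
  calc dist a b = dist (a * a) (a * b) := (h.dist_mul_left a b a).symm
    _ ≤ dist (a * a) a + dist a (a * b) := dist_triangle _ _ _
    _ = dist a (a * a) + dist b (b * b) := by rw [dist_comm (a * a), h.dist_mul_right_self a b]

lemma mul_eq_and_mul_eq_of_mul_self_eq {g : G} (hg : g * g = g) (x : G) :
    g * x = x ∧ x * g = x := by
  constructor
  · have := h.dist_mul_left x (g * x) g
    rw [← mul_assoc, hg, dist_self] at this
    exact (dist_eq_zero.mp this.symm).symm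
  · have := h.dist_mul_right_self x g
    rw [hg, dist_self] at this
    exact (dist_eq_zero.mp this).symm

lemma extendDist_mul_left (c a b : WithOne G) :
    WithOne.extendDist (fun g => dist g (g * g)) (c * a) (c * b) =
      WithOne.extendDist (fun g => dist g (g * g)) a b := by
  cases c using WithOne.recOneCoe with
  | one => simp only [one_mul]
  | coe g => cases a using WithOne.recOneCoe with
    | one => cases b using WithOne.recOneCoe with
      | one => simp
      | coe b => simpa [← WithOne.coe_mul] using h.dist_mul_right_self g b
    | coe a => cases b using WithOne.recOneCoe with
      | one => simpa [← WithOne.coe_mul, dist_comm] using h.dist_mul_right_self g a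
      | coe b => simpa [← WithOne.coe_mul] using h.dist_mul_left a b g

end IsStronglyLeftInvariant

/-- A strongly left-invariant metric semigroup `G` without a two-sided identity embeds
isometrically and homomorphically into the left-invariant metric monoid `G₀ = G ⊔ {e}`
(realized as `WithOne G`, whose multiplication extends that of `G` with `e = 1` a
two-sided identity), where the metric is extended by `d(e,e) = 0`, `d(e,g) = d(g,g²)`. -/
theorem embed_into_leftInvariant_monoid {G : Type*} [Semigroup G] [MetricSpace G]
    (hleft : ∀ a b c : G, dist (c * a) (c * b) = dist a b)
    (hstrong : ∀ a b : G, dist a (a * b) = dist b (b * b))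
    (hnoid : ¬ ∃ e : G, ∀ g : G, e * g = g ∧ g * e = g) :
    ∃ D : WithOne G → WithOne G → ℝ,
      (∀ x, D x x = 0) ∧
      (∀ x y, D x y = 0 → x = y) ∧
      (∀ x y, D x y = D y x) ∧
      (∀ x y z, D x z ≤ D x y + D y z) ∧
      (∀ c a b : WithOne G, D (c * a) (c * b) = D a b) ∧
      (∀ a b : G, D (a : WithOne G) (b : WithOne G) = dist a b) ∧
      (∀ g : G, D (1 : WithOne G) (g : WithOne G) = dist g (g * g)) := by
  have h : IsStronglyLeftInvariant G := ⟨hleft, hstrong⟩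
  have hpos (g : G) : dist g (g * g) ≠ 0 := fun hg =>
    hnoid ⟨g, h.mul_eq_and_mul_eq_of_mul_self_eq (dist_eq_zero.mp hg).symm⟩
  exact ⟨WithOne.extendDist fun g => dist g (g * g), WithOne.extendDist_self _,
    fun _ _ => WithOne.eq_of_extendDist_eq_zero hpos, WithOne.extendDist_comm _,
    WithOne.extendDist_triangle h.dist_mul_self_le h.dist_le_add_dist_mul_self,
    h.extendDist_mul_left, fun _ _ => rfl, fun _ => rfl⟩
end

section
/- In the extension G₀ = G ⊔ {e} of a strongly left-invariant metric semigroup G without identity (with d(e,g) := d(g,g²)), the triangle inequality holds: for all a, b ∈ G, d(a,e) + d(e,b) ≥ d(a,b) and d(a,b) + d(e,b) ≥ d(a,e). -/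
/-- Triangle inequalities for the extended metric on `G ⊔ {e}` (with `d(a,e) := d(a,a²)`):
`d(a,e) + d(e,b) ≥ d(a,b)` and `d(a,b) + d(e,b) ≥ d(a,e)`. -/
theorem extension_triangle_inequalities {G : Type*} [Semigroup G] [MetricSpace G]
    (hleft : ∀ a b c : G, dist (c * a) (c * b) = dist a b)
    (hstrong : ∀ a b : G, dist a (a * b) = dist b (b * b)) :
    ∀ a b : G, dist a b ≤ dist a (a * a) + dist b (b * b) ∧
      dist a (a * a) ≤ dist a b + dist b (b * b) := by
  intro a b
  constructor
  · calc dist a b = dist (a * b) (a * a) := by rw [hleft b a a, dist_comm]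
      _ ≤ dist (a * b) a + dist a (a * a) := dist_triangle _ _ _
      _ = dist a (a * a) + dist b (b * b) := by
          rw [dist_comm (a * b) a, hstrong a b]; ring
  · calc dist a (a * a) ≤ dist a (a * b) + dist (a * b) (a * a) := dist_triangle _ _ _
      _ = dist a b + dist b (b * b) := by rw [hstrong a b, hleft b a a, dist_comm b a]; ring
end

section
/- There exists a countable left-invariant metric semigroup that is not a monoid but contains an idempotent; explicitly, on the set G = { h^{n+1} : n ≥ 0 } ∪ { h^n g : n ≥ 0 } with multiplication h^n g^ε · h^{n'} g^{ε'} := h^{n+n'} g^{ε'}, the operation is associative, g is a left identity (hence idempotent), G has no two-sided identity, and the Manhattan distance d(h^n g^ε, h^{n'} g^{ε'}) := |n−n'| + |ε−ε'| is a left-invariant metric on G. -/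
/-- The carrier of the counterexample semigroup: pairs `(n, ε)` with `ε ∈ {0,1}`,
`(n, ε) ≠ (0, 0)`, where `(n, ε)` encodes `hⁿ gᵉ`. -/
def Gc : Type := {p : ℕ × Fin 2 // p ≠ (0, 0)}

/-- The product `hⁿ gᵉ · hⁿ' gᵉ' = h^(n+n') gᵉ'`. -/
def gmul (x y : Gc) : Gc :=
  ⟨(x.1.1 + y.1.1, y.1.2), by
    intro h
    apply y.2
    have h1 : x.1.1 + y.1.1 = 0 := congrArg Prod.fst h
    have h2 : y.1.2 = 0 := congrArg Prod.snd h
    have h3 : y.1.1 = 0 := by omega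
    have : y.1 = (y.1.1, y.1.2) := rfl
    rw [this, h3, h2]⟩

/-- The Manhattan distance `d(hⁿ gᵉ, hⁿ' gᵉ') = |n - n'| + |ε - ε'|`. -/
noncomputable def gd (x y : Gc) : ℝ :=
  |(x.1.1 : ℝ) - (y.1.1 : ℝ)| + |((x.1.2 : ℕ) : ℝ) - ((y.1.2 : ℕ) : ℝ)|

/-!
Multiplication adds the `h`-exponents and keeps the `g`-exponent of the right factor, so it is
associative and `g = (0, 1)` is a left identity. A right identity `e` would give every element the
`g`-exponent of `e`, which fails for `h` and `g`. The distance `gd` is the `ℓ¹` distance between the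
coordinates `(n, ε) ∈ ℝ × ℝ`, and left multiplication by `(m, ε)` acts on these coordinates as the
translation by `(m, 0)`, an isometry.
-/

namespace Gc

theorem gmul_val (x y : Gc) : (gmul x y).1 = (x.1.1 + y.1.1, y.1.2) := rfl

theorem gmul_assoc (x y z : Gc) : gmul (gmul x y) z = gmul x (gmul y z) :=
  Subtype.ext <| by simp only [gmul_val, Nat.add_assoc]

theorem gmul_left_identity (x : Gc) : gmul ⟨(0, 1), by decide⟩ x = x :=
  Subtype.ext <| Prod.ext (Nat.zero_add _) rfl

theorem snd_eq_of_forall_gmul_eq_self {e : Gc} (he : ∀ x, gmul x e = x) (x : Gc) :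
    x.1.2 = e.1.2 :=
  (congrArg (fun y : Gc => y.1.2) (he x)).symm

theorem not_exists_two_sided_identity :
    ¬ ∃ e : Gc, (∀ x : Gc, gmul e x = x) ∧ (∀ x : Gc, gmul x e = x) := by
  rintro ⟨e, -, he⟩
  have h0 := snd_eq_of_forall_gmul_eq_self he ⟨(1, 0), by decide⟩
  have h1 := snd_eq_of_forall_gmul_eq_self he ⟨(0, 1), by decide⟩
  exact absurd (h0.trans h1.symm) (by decide)

noncomputable def toL1 (x : Gc) : WithLp 1 (ℝ × ℝ) :=
  WithLp.toLp 1 ((x.1.1 : ℝ), ((x.1.2 : ℕ) : ℝ))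

theorem toL1_injective : Function.Injective toL1 := by
  intro x y h
  have hn : (x.1.1 : ℝ) = y.1.1 := congrArg (fun v => (WithLp.ofLp v).1) h
  have hε : ((x.1.2 : ℕ) : ℝ) = (y.1.2 : ℕ) := congrArg (fun v => (WithLp.ofLp v).2) h
  exact Subtype.ext <| Prod.ext (by exact_mod_cast hn) (Fin.ext (by exact_mod_cast hε))

theorem gd_eq_dist (x y : Gc) : gd x y = dist (toL1 x) (toL1 y) := by
  rw [WithLp.prod_dist_eq_of_L1, Real.dist_eq, Real.dist_eq]
  rfl

theorem toL1_gmul (c a : Gc) : toL1 (gmul c a) = WithLp.toLp 1 ((c.1.1 : ℝ), 0) + toL1 a := by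
  refine WithLp.ofLp_injective 1 (Prod.ext ?_ ?_) <;> simp [toL1, gmul_val]

theorem gd_gmul_left (c a b : Gc) : gd (gmul c a) (gmul c b) = gd a b := by
  simp only [gd_eq_dist, toL1_gmul, dist_add_left]

end Gc

/-- There is a countable left-invariant metric semigroup which is not a monoid but contains
an idempotent: the multiplication `gmul` on `Gc` is associative, `g = (0,1)` is a left
identity (hence idempotent), there is no two-sided identity, and the Manhattan distance is
a left-invariant metric. -/
theorem counterexample_leftInvariant_semigroup :
    (∀ x y z : Gc, gmul (gmul x y) z = gmul x (gmul y z)) ∧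
    (∀ x : Gc, gmul ⟨(0, 1), by decide⟩ x = x) ∧
    (gmul (⟨(0, 1), by decide⟩ : Gc) ⟨(0, 1), by decide⟩ = ⟨(0, 1), by decide⟩) ∧
    (¬ ∃ e : Gc, (∀ x : Gc, gmul e x = x) ∧ (∀ x : Gc, gmul x e = x)) ∧
    (∀ x : Gc, gd x x = 0) ∧
    (∀ x y : Gc, gd x y = 0 → x = y) ∧
    (∀ x y : Gc, gd x y = gd y x) ∧
    (∀ x y z : Gc, gd x z ≤ gd x y + gd y z) ∧
    (∀ c a b : Gc, gd (gmul c a) (gmul c b) = gd a b) := by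
  refine ⟨Gc.gmul_assoc, Gc.gmul_left_identity, Gc.gmul_left_identity _,
    Gc.not_exists_two_sided_identity, fun x => ?_, fun x y h => ?_, fun x y => ?_,
    fun x y z => ?_, Gc.gd_gmul_left⟩
  · simpa only [Gc.gd_eq_dist] using dist_self (Gc.toL1 x)
  · exact Gc.toL1_injective (dist_eq_zero.mp (Gc.gd_eq_dist x y ▸ h))
  · simpa only [Gc.gd_eq_dist] using dist_comm (Gc.toL1 x) (Gc.toL1 y)
  · simpa only [Gc.gd_eq_dist] using dist_triangle (Gc.toL1 x) (Gc.toL1 y) (Gc.toL1 z)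
end

section
/- The semigroup G = { (n,ε) ∈ ℤ≥0 × {0,1} : (n,ε) ≠ (0,0) } with product (n,ε)·(n',ε') = (n+n',ε') and Manhattan metric d((n,ε),(n',ε')) = |n−n'| + |ε−ε'| is left-invariant but not strongly left-invariant: d((n,1), (n,1)·(n',0)) = n'+1 ≠ n' = d((n',0), (n',0)·(n',0)) for all n' > 0 and n ≥ 0. -/
/-- The metric `gd` on `Gc` is left-invariant but not strongly left-invariant:
`d(hⁿg, hⁿg · hⁿ') = n' + 1 ≠ n' = d(hⁿ', hⁿ' · hⁿ')` for all `n' > 0`, `n ≥ 0`. -/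
theorem counterexample_not_strongly_leftInvariant :
    (∀ c a b : Gc, gd (gmul c a) (gmul c b) = gd a b) ∧
    (∀ (n n' : ℕ) (hn' : 0 < n'),
      gd ⟨(n, 1), by simp⟩ (gmul ⟨(n, 1), by simp⟩ ⟨(n', 0), by simp [hn'.ne']⟩)
        = (n' : ℝ) + 1 ∧
      gd ⟨(n', 0), by simp [hn'.ne']⟩
          (gmul ⟨(n', 0), by simp [hn'.ne']⟩ ⟨(n', 0), by simp [hn'.ne']⟩)
        = (n' : ℝ) ∧
      ((n' : ℝ) + 1 ≠ (n' : ℝ))) := by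
  refine ⟨fun c a b => ?_, fun n n' hn' => ⟨?_, ?_, by norm_num⟩⟩
  · simp [gd, gmul]
  · simp [gd, gmul]
  · simp [gd, gmul]
end
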